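/- arXiv:2101.09842 — 3 statements merged into one kernel-verified Lean document; each statement's English description precedes it below -/
import Mathlib

section
/- Let n, M be positive integers, let Φ be a symmetric n×n real matrix, P an n×M real matrix, f ∈ ℝⁿ, I_φ ∈ ℝⁿ and I_π ∈ ℝᴹ. Suppose the interpolation coefficients c ∈ ℝⁿ, d ∈ ℝᴹ satisfy Φc + Pd = f and Pᵀc = 0, and the quadrature weights w ∈ ℝⁿ, v ∈ ℝᴹ satisfy Φw + Pv = I_φ and Pᵀw = I_π. Then the integral of the interpolant equals the weighted sum of function values: I_φᵀc + I_πᵀd = fᵀw = Σ_{j=1}^{n} w_j f_j. -/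
open Matrix Finset

/-- **Exactness identity underlying RBF-FD quadrature.**
If the interpolation coefficients `c, d` satisfy `Φ c + P d = f`, `Pᵀ c = 0`,
and the quadrature weights `w, v` satisfy `Φ w + P v = Iφ`, `Pᵀ w = Iπ`
(with `Φ` symmetric), then the integral of the interpolant equals the
weighted sum of function values. -/
theorem rbf_fd_quadrature_exactness
    (n M : ℕ) (hn : 0 < n) (hM : 0 < M)
    (Φ : Matrix (Fin n) (Fin n) ℝ) (hΦ : Φ.IsSymm)
    (P : Matrix (Fin n) (Fin M) ℝ)
    (f Iφ : Fin n → ℝ) (Iπ : Fin M → ℝ)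
    (c w : Fin n → ℝ) (d v : Fin M → ℝ)
    (hinterp : Φ *ᵥ c + P *ᵥ d = f)
    (hconstr : Pᵀ *ᵥ c = 0)
    (hweights : Φ *ᵥ w + P *ᵥ v = Iφ)
    (hweights' : Pᵀ *ᵥ w = Iπ) :
    Iφ ⬝ᵥ c + Iπ ⬝ᵥ d = f ⬝ᵥ w ∧ f ⬝ᵥ w = ∑ j, w j * f j := by
  constructor
  · have h1 : (P *ᵥ v) ⬝ᵥ c = 0 := by
      rw [dotProduct_comm, dotProduct_mulVec, ← mulVec_transpose, hconstr,
        zero_dotProduct]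
    have h2 : (Φ *ᵥ w) ⬝ᵥ c = w ⬝ᵥ (Φ *ᵥ c) := by
      rw [dotProduct_comm, dotProduct_mulVec, ← mulVec_transpose, hΦ.eq,
        dotProduct_comm, dotProduct_mulVec, ← mulVec_transpose, hΦ.eq]
    have h3 : Iπ ⬝ᵥ d = w ⬝ᵥ (P *ᵥ d) := by
      rw [← hweights', mulVec_transpose, ← dotProduct_mulVec]
    calc Iφ ⬝ᵥ c + Iπ ⬝ᵥ d
        = (Φ *ᵥ w) ⬝ᵥ c + (P *ᵥ v) ⬝ᵥ c + Iπ ⬝ᵥ d := by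
          rw [← hweights, add_dotProduct]
      _ = w ⬝ᵥ (Φ *ᵥ c) + w ⬝ᵥ (P *ᵥ d) := by rw [h1, h2, h3]; ring
      _ = w ⬝ᵥ f := by rw [← dotProduct_add, hinterp]
      _ = f ⬝ᵥ w := dotProduct_comm _ _
  · simp [dotProduct, mul_comm]
end

section
/- Let a, b, c ∈ ℝ³ and let n_ab, n_bc, n_ca ∈ ℝ³ be arbitrary vectors (the averaged edge normals). Define the cutting-plane normals n_pab = n_ab × (b − a), n_pbc = n_bc × (c − b), n_pca = n_ca × (a − c), and v = n_pab × n_pca, and assume n_pbc · v ≠ 0. Then the point p = a + ((n_pbc · (b − a))/(n_pbc · v)) v lies on all three cutting planes; that is, (p − a) · n_pab = 0, (p − b) · n_pbc = 0, and (p − c) · n_pca = 0. -/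
/-!
The point `p` lies on the line through `a` in direction `v = n_pab × n_pca`, which is orthogonal
to `n_pab` and `n_pca`. The line therefore stays in the `ab`-plane and, since `n_pca ⊥ a − c`,
in the `ca`-plane; the parameter `(n_pbc · (b − a)) / (n_pbc · v)` is the one where it meets
the `bc`-plane.
-/

open scoped RealInnerProductSpace

/-- The vector cross product on `EuclideanSpace ℝ (Fin 3)`. -/
noncomputable def cross3 (u v : EuclideanSpace ℝ (Fin 3)) : EuclideanSpace ℝ (Fin 3) :=
  (WithLp.equiv 2 (Fin 3 → ℝ)).symm
    (crossProduct ((WithLp.equiv 2 (Fin 3 → ℝ)) u) ((WithLp.equiv 2 (Fin 3 → ℝ)) v))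

lemma inner_self_cross3 (u w : EuclideanSpace ℝ (Fin 3)) : ⟪u, cross3 u w⟫ = 0 := by
  rw [real_inner_comm]
  exact dot_self_cross (WithLp.ofLp u) (WithLp.ofLp w)

lemma inner_cross3_self (u w : EuclideanSpace ℝ (Fin 3)) : ⟪w, cross3 u w⟫ = 0 := by
  rw [real_inner_comm]
  exact dot_cross_self (WithLp.ofLp u) (WithLp.ofLp w)

section Plane

variable {E : Type*} [NormedAddCommGroup E] [InnerProductSpace ℝ E]

lemma inner_add_smul_sub_eq_zero {n v a b : E} (t : ℝ) (hv : ⟪n, v⟫ = 0)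
    (hab : ⟪n, a - b⟫ = 0) : ⟪a + t • v - b, n⟫ = 0 := by
  rw [add_sub_right_comm, inner_add_left, real_inner_smul_left, real_inner_comm, hab,
    real_inner_comm, hv, mul_zero, add_zero]

lemma inner_add_div_smul_sub_eq_zero {n v : E} (a b : E) (hnv : ⟪n, v⟫ ≠ 0) :
    ⟪a + (⟪n, b - a⟫ / ⟪n, v⟫) • v - b, n⟫ = 0 := by
  rw [add_sub_right_comm, inner_add_left, real_inner_smul_left, real_inner_comm n v,
    div_mul_cancel₀ _ hnv, real_inner_comm, ← inner_add_right, sub_add_sub_cancel', sub_self,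
    inner_zero_right]

end Plane

theorem projection_point_on_cutting_planes_general
    (a b c nca : EuclideanSpace ℝ (Fin 3))
    (npab npbc npca v p : EuclideanSpace ℝ (Fin 3))
    (hpca : npca = cross3 nca (a - c))
    (hv : v = cross3 npab npca)
    (hnz : ⟪npbc, v⟫ ≠ 0)
    (hp : p = a + (⟪npbc, b - a⟫ / ⟪npbc, v⟫) • v) :
    ⟪p - a, npab⟫ = 0 ∧ ⟪p - b, npbc⟫ = 0 ∧ ⟪p - c, npca⟫ = 0 := by
  subst hp
  refine ⟨?_, inner_add_div_smul_sub_eq_zero a b hnz, ?_⟩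
  · refine inner_add_smul_sub_eq_zero _ (hv ▸ inner_self_cross3 npab npca) ?_
    rw [sub_self, inner_zero_right]
  · refine inner_add_smul_sub_eq_zero _ (hv ▸ inner_cross3_self npab npca) ?_
    rw [hpca, real_inner_comm]
    exact inner_cross3_self nca (a - c)

/-- **The projection point lies on all three cutting planes.**
With cutting-plane normals `n_pab = n_ab × (b − a)`, `n_pbc = n_bc × (c − b)`,
`n_pca = n_ca × (a − c)` and `v = n_pab × n_pca`, if `n_pbc · v ≠ 0` then the point
`p = a + ((n_pbc · (b − a))/(n_pbc · v)) v` satisfies `(p − a)·n_pab = 0`,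
`(p − b)·n_pbc = 0` and `(p − c)·n_pca = 0`. -/
theorem projection_point_on_cutting_planes
    (a b c nab nbc nca : EuclideanSpace ℝ (Fin 3))
    (npab npbc npca v p : EuclideanSpace ℝ (Fin 3))
    (hpab : npab = cross3 nab (b - a))
    (hpbc : npbc = cross3 nbc (c - b))
    (hpca : npca = cross3 nca (a - c))
    (hv : v = cross3 npab npca)
    (hnz : ⟪npbc, v⟫ ≠ 0)
    (hp : p = a + (⟪npbc, b - a⟫ / ⟪npbc, v⟫) • v) :
    ⟪p - a, npab⟫ = 0 ∧ ⟪p - b, npbc⟫ = 0 ∧ ⟪p - c, npca⟫ = 0 :=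
  projection_point_on_cutting_planes_general a b c nca npab npbc npca v p hpca hv hnz hp
end

section
/- Let a, b, c, p ∈ ℝ³, let y(λ, μ) = (1 − λ) a + λ((1 − μ) b + μ c), and suppose y(λ, μ) ≠ p. Define v(λ, μ) = (y(λ, μ) − p)/‖y(λ, μ) − p‖ and x(λ, μ, σ) = y(λ, μ) + σ v(λ, μ). Then the determinant of the Jacobian matrix of x with respect to the ordered variables (σ, λ, μ) equals (1 + σ/‖y(λ, μ) − p‖)² · λ · [v(λ, μ) · ((b − a) × (c − b))]. -/
/-!
Write `r = ‖y − p‖`. The derivative of the unit vector `v = (y − p)/r` is `r⁻¹ ∂y` minus a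
multiple of `v`, so the Jacobian of `x` has columns `∂_σ x = v` and, up to multiples of `v`,
`∂_λ x = (1 + σ/r) ∂_λ y`, `∂_μ x = (1 + σ/r) ∂_μ y`. Its determinant is the triple product
`⟪v, ∂_λ x × ∂_μ x⟫`, which does not see those multiples, and
`∂_λ y × ∂_μ y = λ (b − a) × (c − b)` since `∂_μ y = λ (c − b)`.
-/

open scoped RealInnerProductSpace

open scoped Matrix

local notation "ℝ³" => EuclideanSpace ℝ (Fin 3)

section Cross3

theorem inner_cross3_eq_dotProduct (u v w : ℝ³) :
    ⟪u, cross3 v w⟫ = u.ofLp ⬝ᵥ v.ofLp ⨯₃ w.ofLp := by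
  simp [cross3, EuclideanSpace.inner_eq_star_dotProduct, dotProduct_comm]

theorem cross3_smul_smul (u v : ℝ³) (s t : ℝ) :
    cross3 (s • u) (t • v) = (s * t) • cross3 u v := by
  simp [cross3, smul_smul, mul_comm]

theorem cross3_add_smul_smul (u v : ℝ³) (s t : ℝ) :
    cross3 (u + t • v) (s • v) = s • cross3 u v := by
  simp [cross3, cross_self]

theorem inner_cross3_add_smul_add_smul (w u v : ℝ³) (s t : ℝ) :
    ⟪w, cross3 (u + s • w) (v + t • w)⟫ = ⟪w, cross3 u v⟫ := by
  simp [inner_cross3_eq_dotProduct, cross_self, dot_self_cross, dot_cross_self]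

theorem LinearMap.det_eq_inner_cross3 (L : ℝ³ →ₗ[ℝ] ℝ³) :
    LinearMap.det L = ⟪L (EuclideanSpace.single 0 1),
      cross3 (L (EuclideanSpace.single 1 1)) (L (EuclideanSpace.single 2 1))⟫ := by
  rw [inner_cross3_eq_dotProduct, triple_product_eq_det,
    ← LinearMap.det_toMatrix (EuclideanSpace.basisFun (Fin 3) ℝ).toBasis, ← Matrix.det_transpose]
  congr 1
  ext i j
  fin_cases i <;> simp [LinearMap.toMatrix_apply]

theorem ContinuousLinearMap.det_smul_add_smulRight (D : ℝ³ →L[ℝ] ℝ³) (φ : ℝ³ →L[ℝ] ℝ) (w : ℝ³)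
    (t : ℝ) (hD : D (EuclideanSpace.single 0 1) = 0) (hφ : φ (EuclideanSpace.single 0 1) = 1) :
    LinearMap.det ((t • D + φ.smulRight w : ℝ³ →L[ℝ] ℝ³) : ℝ³ →ₗ[ℝ] ℝ³) =
      t ^ 2 * ⟪w, cross3 (D (EuclideanSpace.single 1 1)) (D (EuclideanSpace.single 2 1))⟫ := by
  rw [LinearMap.det_eq_inner_cross3]
  simp [hD, hφ, inner_cross3_add_smul_add_smul, cross3_smul_smul, inner_smul_right, sq]

end Cross3

section Normalize

variable {E F : Type*} [NormedAddCommGroup E] [NormedSpace ℝ E]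
  [NormedAddCommGroup F] [InnerProductSpace ℝ F] {W : E → F} {D : E →L[ℝ] F} {q : E}

theorem HasFDerivAt.inv_norm (hW : HasFDerivAt W D q) (h0 : W q ≠ 0) :
    HasFDerivAt (fun s => ‖W s‖⁻¹) (-(‖W q‖ ^ 3)⁻¹ • (innerSL ℝ (W q)).comp D) q := by
  have hsq : ‖W q‖ ^ 2 ≠ 0 := by positivity
  have h := (hasDerivAt_inv (Real.sqrt_ne_zero'.2 (by positivity))).comp_hasFDerivAt q
    (hW.norm_sq.sqrt hsq)
  simp only [Function.comp_def, Real.sqrt_sq (norm_nonneg _)] at h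
  refine h.congr_fderiv (ContinuousLinearMap.ext fun h => ?_)
  simp only [one_div, mul_inv_rev, neg_smul, neg_apply, smul_apply,
    ContinuousLinearMap.comp_apply, coe_innerSL_apply, nsmul_eq_mul, Nat.cast_ofNat, smul_eq_mul]
  field_simp

theorem HasFDerivAt.inv_norm_smul (hW : HasFDerivAt W D q) (h0 : W q ≠ 0) :
    HasFDerivAt (fun s => ‖W s‖⁻¹ • W s)
      (‖W q‖⁻¹ • D - ((‖W q‖ ^ 3)⁻¹ • (innerSL ℝ (W q)).comp D).smulRight (W q)) q := by
  refine ((hW.inv_norm h0).smul hW).congr_fderiv (ContinuousLinearMap.ext fun h => ?_)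
  simp only [neg_smul, add_apply, smul_apply, ContinuousLinearMap.smulRight_apply, neg_apply,
    ContinuousLinearMap.comp_apply, coe_innerSL_apply, smul_eq_mul, sub_apply]
  abel

theorem HasFDerivAt.add_smul_inv_norm_smul_sub {Y : E → F} {σ : E → ℝ} {Dσ : E →L[ℝ] ℝ} {p : F}
    (hY : HasFDerivAt Y D q) (hσ : HasFDerivAt σ Dσ q) (hp : Y q ≠ p) :
    HasFDerivAt (fun s => Y s + σ s • (‖Y s - p‖⁻¹ • (Y s - p)))
      ((1 + σ q / ‖Y q - p‖) • D + (Dσ - (σ q / ‖Y q - p‖) •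
        (innerSL ℝ (‖Y q - p‖⁻¹ • (Y q - p))).comp D).smulRight (‖Y q - p‖⁻¹ • (Y q - p))) q := by
  have hV := (hY.sub_const p).inv_norm_smul (sub_ne_zero.2 hp)
  refine (hY.add (hσ.smul hV)).congr_fderiv (ContinuousLinearMap.ext fun h => ?_)
  simp only [map_sub, ContinuousLinearMap.sub_comp, add_apply, smul_apply, sub_apply,
    ContinuousLinearMap.smulRight_apply, ContinuousLinearMap.comp_apply, coe_innerSL_apply,
    smul_eq_mul, smul_smul, map_smul, ContinuousLinearMap.smul_comp]
  module

end Normalize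

theorem hasFDerivAt_triangle_param {F : Type*} [NormedAddCommGroup F] [NormedSpace ℝ F]
    (a b c : F) (q : ℝ³) :
    HasFDerivAt (fun s : ℝ³ => (1 - s 1) • a + s 1 • ((1 - s 2) • b + s 2 • c))
      ((EuclideanSpace.proj 1).smulRight (b - a + q 2 • (c - b)) +
        (q 1 • EuclideanSpace.proj 2 : ℝ³ →L[ℝ] ℝ).smulRight (c - b)) q := by
  have hproj (i : Fin 3) : HasFDerivAt (fun s : ℝ³ => s i) (EuclideanSpace.proj (𝕜 := ℝ) i) q :=
    PiLp.hasFDerivAt_apply 2 q i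
  have h := (((hasFDerivAt_const 1 q).sub (hproj 1)).smul_const a).add ((hproj 1).smul
    ((((hasFDerivAt_const 1 q).sub (hproj 2)).smul_const b).add ((hproj 2).smul_const c)))
  refine h.congr_fderiv (ContinuousLinearMap.ext fun h => ?_)
  simp only [zero_sub, smul_add, Pi.sub_apply, Pi.add_apply, add_apply,
    ContinuousLinearMap.smulRight_apply, neg_apply, PiLp.proj_apply, neg_smul, smul_apply,
    smul_neg, smul_eq_mul]
  module

/-- **Jacobian determinant of the sliver parameterization (triangle coordinates).**
With `y(λ, μ) = (1 − λ) a + λ((1 − μ) b + μ c)`, `v(λ, μ) = (y(λ, μ) − p)/‖y(λ, μ) − p‖`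
and `x(σ, λ, μ) = y(λ, μ) + σ v(λ, μ)` (a point `q` encodes `(σ, λ, μ) = (q 0, q 1, q 2)`),
the Jacobian determinant of `x` with respect to `(σ, λ, μ)` equals
`(1 + σ/‖y(λ, μ) − p‖)² · λ · [v(λ, μ) · ((b − a) × (c − b))]` wherever `y(λ, μ) ≠ p`. -/
theorem det_jacobian_sliver_param_triangle
    (a b c p : EuclideanSpace ℝ (Fin 3))
    (y : ℝ → ℝ → EuclideanSpace ℝ (Fin 3))
    (hy : ∀ lam mu : ℝ, y lam mu = (1 - lam) • a + lam • ((1 - mu) • b + mu • c))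
    (v : ℝ → ℝ → EuclideanSpace ℝ (Fin 3))
    (hv : ∀ lam mu : ℝ, v lam mu = ‖y lam mu - p‖⁻¹ • (y lam mu - p))
    (x : EuclideanSpace ℝ (Fin 3) → EuclideanSpace ℝ (Fin 3))
    (hx : ∀ q : EuclideanSpace ℝ (Fin 3), x q = y (q 1) (q 2) + q 0 • v (q 1) (q 2)) :
    ∀ q : EuclideanSpace ℝ (Fin 3), y (q 1) (q 2) ≠ p →
      LinearMap.det (fderiv ℝ x q :
          EuclideanSpace ℝ (Fin 3) →ₗ[ℝ] EuclideanSpace ℝ (Fin 3)) =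
        (1 + q 0 / ‖y (q 1) (q 2) - p‖) ^ 2 * q 1 *
          ⟪v (q 1) (q 2), cross3 (b - a) (c - b)⟫ := by
  intro q hq
  have hY := hasFDerivAt_triangle_param a b c q
  simp only [← hy] at hY
  have hx_eq :
      x = fun s : ℝ³ => y (s 1) (s 2) + s 0 • (‖y (s 1) (s 2) - p‖⁻¹ • (y (s 1) (s 2) - p)) :=
    funext fun s => by rw [hx, hv]
  have hL := hY.add_smul_inv_norm_smul_sub (PiLp.hasFDerivAt_apply 2 q 0) hq
  rw [← hx_eq, ← hv] at hL
  rw [hL.fderiv, ContinuousLinearMap.det_smul_add_smulRight _ _ _ _ (by simp) (by simp)]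
  simp [cross3_add_smul_smul, inner_smul_right, mul_assoc]
end
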